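/- Let N = ⟨W, R, ⊩⟩ be a finite tree-like GL-model with valuation for the single variable p, and let M be the Veltman model obtained from N by the flat/natural end-point extension construction. Then for every x ∈ W: N, x ⊩ p implies M, x ⊩ ⊤ ▷ ◇⊤, and N, x ⊮ p implies M, x ⊮ ⊤ ▷ ◇⊤. In particular, for every x ∈ W, N, x ⊩ p iff M, x ⊩ p†, where p† = ◇◇⊤ → (⊤ ▷ ◇⊤). -/
import Mathlib


/-- Formulas of the modal language with a single unary modality `□`.
Variable number `0` plays the role of the propositional variable `p`. -/
inductive GLForm : Type
  | bot : GLForm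
  | var : ℕ → GLForm
  | imp : GLForm → GLForm → GLForm
  | box : GLForm → GLForm

namespace GLForm

/-- `¬A` abbreviates `A → ⊥`. -/
def neg (A : GLForm) : GLForm := A.imp .bot

/-- `⊤` abbreviates `¬⊥`. -/
def top : GLForm := neg .bot

/-- `◇A` abbreviates `¬□¬A`. -/
def dia (A : GLForm) : GLForm := (A.neg.box).neg

/-- `A` contains at most the propositional variable `p` (i.e. variable number `0`). -/
def onlyP : GLForm → Prop
  | bot => True
  | var n => n = 0
  | imp A B => A.onlyP ∧ B.onlyP
  | box A => A.onlyP

end GLForm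

/-- Formulas of the interpretability language: a unary modality `□` and a
binary modality `▷`. -/
inductive ILForm : Type
  | bot : ILForm
  | var : ℕ → ILForm
  | imp : ILForm → ILForm → ILForm
  | box : ILForm → ILForm
  | rhd : ILForm → ILForm → ILForm

namespace ILForm

/-- `¬A` abbreviates `A → ⊥`. -/
def neg (A : ILForm) : ILForm := A.imp .bot

/-- `⊤` abbreviates `¬⊥`. -/
def top : ILForm := neg .bot

/-- `◇A` abbreviates `¬□¬A`. -/
def dia (A : ILForm) : ILForm := (A.neg.box).neg

end ILForm

/-- The translation of the variable `p`: the formula `◇◇⊤ → (⊤ ▷ ◇⊤)`. -/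
def pDag : ILForm := (ILForm.top.dia.dia).imp (ILForm.top.rhd ILForm.top.dia)

/-- The translation `†` of one-variable `GL`-formulas into closed `IL`-formulas:
`⊥† = ⊥`, `p† = ◇◇⊤ → (⊤ ▷ ◇⊤)`, `(A→B)† = A† → B†`, `(□A)† = □(◇◇⊤ → A†)`. -/
def dag : GLForm → ILForm
  | .bot => .bot
  | .var _ => pDag
  | .imp A B => (dag A).imp (dag B)
  | .box A => ((ILForm.top.dia.dia).imp (dag A)).box

/-- Kripke forcing for the language with `□`, over a frame `(W, R)` with
valuation `v` (variable number `0` is the variable `p`). -/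
def KSat {W : Type} (R : W → W → Prop) (v : W → ℕ → Prop) : W → GLForm → Prop
  | x, .bot => False
  | x, .var n => v x n
  | x, .imp A B => KSat R v x A → KSat R v x B
  | x, .box A => ∀ y, R x y → KSat R v y A

/-- Veltman forcing for the interpretability language, over `(W, R, S)` with
valuation `v`:  `x ⊩ □A` iff every `R`-successor of `x` forces `A`, and
`x ⊩ A ▷ B` iff every `R`-successor of `x` forcing `A` has an `S x`-successor
forcing `B`. -/
def ILSat {W : Type} (R : W → W → Prop) (S : W → W → W → Prop)
    (v : W → ℕ → Prop) : W → ILForm → Prop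
  | x, .bot => False
  | x, .var n => v x n
  | x, .imp A B => ILSat R S v x A → ILSat R S v x B
  | x, .box A => ∀ y, R x y → ILSat R S v y A
  | x, .rhd A B => ∀ y, R x y → ILSat R S v y A → ∃ z, S x y z ∧ ILSat R S v z B

/-- A `GL`-model: a Kripke model whose accessibility relation is transitive
and conversely well-founded. -/
structure GLModel where
  W : Type
  nonempty : Nonempty W
  R : W → W → Prop
  val : W → ℕ → Prop
  trans : Transitive R
  cwf : WellFounded (Function.swap R)

/-- A Veltman model (`IL`-model): `R` is transitive and conversely
well-founded, each `S x` is transitive, reflexive on the `R`-successors of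
`x`, relates only `R`-successors of `x`, and contains `R` restricted to the
`R`-successors of `x`. -/
structure VeltmanModel where
  W : Type
  nonempty : Nonempty W
  R : W → W → Prop
  S : W → W → W → Prop
  val : W → ℕ → Prop
  R_trans : Transitive R
  R_cwf : WellFounded (Function.swap R)
  S_trans : ∀ x, Transitive (S x)
  S_refl : ∀ x y, R x y → S x y y
  S_dom : ∀ x y z, S x y z → R x y ∧ R x z
  S_of_R : ∀ x y z, R x y → R y z → S x y z

/-- `e` is an end-point of the model: a world with no `R`-successors. -/
def GLModel.IsEndpoint (N : GLModel) (e : N.W) : Prop := ∀ y, ¬ N.R e y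

/-- `N` is a finite tree-like `GL`-model: its set of worlds is finite, it has
a root below every other world, and its (transitive) accessibility relation is
the strict descendant relation of a tree, i.e. the predecessors of any world
are linearly ordered by `R`. -/
def GLModel.FiniteTreeLike (N : GLModel) : Prop :=
  Finite N.W ∧ (∃ r : N.W, ∀ x, x = r ∨ N.R r x) ∧
    ∀ x y z : N.W, N.R x z → N.R y z → (N.R x y ∨ x = y ∨ N.R y x)

/-- The set `E` of end-points of `N`. -/
def Endpoints (N : GLModel) : Type := {e : N.W // N.IsEndpoint e}

/-- The extended set of worlds `W' = W ⊎ E♭ ⊎ E♮` (two fresh disjoint copies of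
the end-points are added). -/
def Wext (N : GLModel) : Type := N.W ⊕ (Endpoints N ⊕ Endpoints N)

/-- The copy of an old world `x ∈ W` inside `W'`. -/
def old (N : GLModel) (x : N.W) : Wext N := Sum.inl x

/-- The world `e♭` added above the end-point `e`. -/
def flatPt (N : GLModel) (e : Endpoints N) : Wext N := Sum.inr (Sum.inl e)

/-- The world `e♮` added above `e♭`. -/
def natPt (N : GLModel) (e : Endpoints N) : Wext N := Sum.inr (Sum.inr e)

/-- The relation `R ∪ {(e, e♭) : e ∈ E} ∪ {(e♭, e♮) : e ∈ E}` on `W'`,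
whose transitive closure is the new accessibility relation `R'`. -/
def baseR (N : GLModel) : Wext N → Wext N → Prop :=
  fun a b =>
    match a, b with
    | Sum.inl x, Sum.inl y => N.R x y
    | Sum.inl x, Sum.inr (Sum.inl e) => x = e.val
    | Sum.inr (Sum.inl e), Sum.inr (Sum.inr e') => e = e'
    | _, _ => False

/-- The new accessibility relation `R'`: the transitive closure of
`R ∪ {(e, e♭) : e ∈ E} ∪ {(e♭, e♮) : e ∈ E}`. -/
def Rext (N : GLModel) : Wext N → Wext N → Prop := Relation.TransGen (baseR N)

/-- The generating relation for `S'_x` when `x ∈ W` is an old world: the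
restriction of `R'` to `{y : x R' y}`, together with the pairs `(e♮, e♭)` for
those end-points `e` with `N, x ⊩ p` and `x R⁼ e`. -/
def baseS (N : GLModel) (x : N.W) : Wext N → Wext N → Prop :=
  fun y z =>
    (Rext N (old N x) y ∧ Rext N (old N x) z ∧ Rext N y z) ∨
    (∃ e : Endpoints N, y = natPt N e ∧ z = flatPt N e ∧
      N.val x 0 ∧ (N.R x e.val ∨ x = e.val))

/-- The family `S'` of the Veltman model obtained by the flat/natural
end-point extension construction: `S'_{e♭} = {(e♮, e♮)}`, `S'_{e♮} = ∅`, and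
for `x ∈ W`, `S'_x` is the smallest transitive and reflexive relation on
`{y : x R' y}` containing the restriction of `R'` to `{y : x R' y}` and the
pairs `(e♮, e♭)` for every end-point `e` with `N, x ⊩ p` and `x R⁼ e`. -/
def Sext (N : GLModel) : Wext N → Wext N → Wext N → Prop :=
  fun a y z =>
    match a with
    | Sum.inl x => Rext N (old N x) y ∧ Rext N (old N x) z ∧
        Relation.ReflTransGen (baseS N x) y z
    | Sum.inr (Sum.inl e) => y = natPt N e ∧ z = natPt N e
    | Sum.inr (Sum.inr _) => False

section Aux

variable {N : GLModel}

/-- Classification of what worlds can be reached by `R'` from a given world. -/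
def reachP (N : GLModel) : Wext N → Wext N → Prop
  | Sum.inl x, Sum.inl y => N.R x y
  | Sum.inl x, Sum.inr (Sum.inl e) => N.R x e.val ∨ x = e.val
  | Sum.inl x, Sum.inr (Sum.inr e) => N.R x e.val ∨ x = e.val
  | Sum.inr (Sum.inl e), b => b = natPt N e
  | Sum.inr (Sum.inr _), _ => False

lemma baseR_reach {a b : Wext N} (h : baseR N a b) : reachP N a b := by
  rcases a with x | e | e <;> rcases b with y | e' | e' <;>
    simp only [baseR, reachP] at h ⊢ <;>
    first
      | exact h
      | exact Or.inr h
      | (subst h; rfl)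
      | exact h.elim

lemma reach_step {a c b : Wext N} (h1 : reachP N a c) (h2 : baseR N c b) :
    reachP N a b := by
  rcases a with x | e | e
  · rcases c with y | e' | e'
    · rcases b with z | e'' | e''
      · exact N.trans h1 h2
      · exact Or.inl (by rwa [show y = e''.val from h2] at h1)
      · exact h2.elim
    · rcases b with z | e'' | e''
      · exact h2.elim
      · exact h2.elim
      · rwa [show e' = e'' from h2] at h1
    · rcases b with z | e'' | e'' <;> exact h2.elim
  · rw [show c = natPt N e from h1] at h2
    rcases b with z | e'' | e'' <;> exact h2.elim
  · exact h1.elim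

lemma rext_reach {a b : Wext N} (h : Rext N a b) : reachP N a b := by
  induction h with
  | single h => exact baseR_reach h
  | tail _ h2 ih => exact reach_step ih h2

lemma nat_no_succ {e : Endpoints N} {b : Wext N} : ¬ Rext N (natPt N e) b :=
  fun h => rext_reach h

lemma rext_of_R {x y : N.W} (h : N.R x y) : Rext N (old N x) (old N y) :=
  Relation.TransGen.single h

lemma rext_flat {x : N.W} {e : Endpoints N} (h : N.R x e.val ∨ x = e.val) :
    Rext N (old N x) (flatPt N e) := by
  rcases h with h | h
  · exact Relation.TransGen.tail
      (Relation.TransGen.single (show baseR N (old N x) (old N e.val) from h))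
      (show baseR N (old N e.val) (flatPt N e) from rfl)
  · exact Relation.TransGen.single (show baseR N (old N x) (flatPt N e) from h)

lemma rext_flat_nat {e : Endpoints N} : Rext N (flatPt N e) (natPt N e) :=
  Relation.TransGen.single (show baseR N (flatPt N e) (natPt N e) from rfl)

lemma rext_nat {x : N.W} {e : Endpoints N} (h : N.R x e.val ∨ x = e.val) :
    Rext N (old N x) (natPt N e) :=
  Relation.TransGen.trans (rext_flat h) rext_flat_nat

lemma exists_endpoint (N : GLModel) (x : N.W) :
    ∃ e : Endpoints N, N.R x e.val ∨ x = e.val := by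
  obtain ⟨m, hm, hmin⟩ := N.cwf.has_min {y | y = x ∨ N.R x y} ⟨x, Or.inl rfl⟩
  refine ⟨⟨m, fun y hy => ?_⟩, ?_⟩
  · rcases hm with rfl | hm
    · exact hmin y (Or.inr hy) hy
    · exact hmin y (Or.inr (N.trans hm hy)) hy
  · rcases hm with rfl | hm
    · exact Or.inr rfl
    · exact Or.inl hm

lemma old_has_succ (N : GLModel) (y : N.W) : ∃ b, Rext N (old N y) b := by
  by_cases h : ∃ z, N.R y z
  · obtain ⟨z, hz⟩ := h; exact ⟨old N z, rext_of_R hz⟩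
  · push_neg at h
    exact ⟨flatPt N ⟨y, h⟩, rext_flat (Or.inr rfl)⟩

lemma sat_top {W : Type} {R : W → W → Prop} {S : W → W → W → Prop}
    {v : W → ℕ → Prop} {w : W} : ILSat R S v w ILForm.top := by
  simp [ILForm.top, ILForm.neg, ILSat]

lemma sat_dia {W : Type} {R : W → W → Prop} {S : W → W → W → Prop}
    {v : W → ℕ → Prop} {w : W} {A : ILForm} :
    ILSat R S v w A.dia ↔ ∃ y, R w y ∧ ILSat R S v y A := by
  simp only [ILForm.dia, ILForm.neg, ILSat]
  constructor
  · intro h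
    by_contra h'
    push_neg at h'
    exact h fun y hy hA => h' y hy hA
  · rintro ⟨y, hy, hA⟩ h
    exact h y hy hA

lemma snat_fixed {x : N.W} {e : Endpoints N} {z : Wext N} (hp : ¬ N.val x 0)
    (h : Relation.ReflTransGen (baseS N x) (natPt N e) z) : z = natPt N e := by
  rcases h.cases_head with h | ⟨c, hc, _⟩
  · exact h.symm
  · rcases hc with ⟨_, _, h⟩ | ⟨e', he, _, hv, _⟩
    · exact absurd h nat_no_succ
    · simp only [natPt] at he
      exact absurd hv hp

end Aux

/-- Let `N = ⟨W, R, ⊩⟩` be a finite tree-like `GL`-model (with a valuation for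
the single variable `p`, i.e. variable number `0`), and let `M` be the Veltman
model obtained from `N` by the flat/natural end-point extension construction
(with an arbitrary valuation `v`, as only closed formulas are evaluated).
Then for every `x ∈ W`: if `N, x ⊩ p` then `M, x ⊩ ⊤ ▷ ◇⊤`, and if
`N, x ⊮ p` then `M, x ⊮ ⊤ ▷ ◇⊤`; in particular `N, x ⊩ p` iff `M, x ⊩ p†`,
where `p† = ◇◇⊤ → (⊤ ▷ ◇⊤)`. -/
theorem p_iff_top_rhd_dia_top (N : GLModel) (hN : N.FiniteTreeLike)
    (v : Wext N → ℕ → Prop) (x : N.W) :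
    (N.val x 0 →
      ILSat (Rext N) (Sext N) v (old N x) (ILForm.top.rhd ILForm.top.dia)) ∧
    (¬ N.val x 0 →
      ¬ ILSat (Rext N) (Sext N) v (old N x) (ILForm.top.rhd ILForm.top.dia)) ∧
    (N.val x 0 ↔ ILSat (Rext N) (Sext N) v (old N x) pDag) := by
  have part1 : N.val x 0 →
      ILSat (Rext N) (Sext N) v (old N x) (ILForm.top.rhd ILForm.top.dia) := by
    intro hp
    intro y hy _
    rcases y with y0 | e | e
    · refine ⟨old N y0, ⟨hy, hy, Relation.ReflTransGen.refl⟩, ?_⟩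
      exact sat_dia.mpr (by
        obtain ⟨b, hb⟩ := old_has_succ N y0
        exact ⟨b, hb, sat_top⟩)
    · refine ⟨flatPt N e, ⟨hy, hy, Relation.ReflTransGen.refl⟩, ?_⟩
      exact sat_dia.mpr ⟨natPt N e, rext_flat_nat, sat_top⟩
    · have hre : N.R x e.val ∨ x = e.val := rext_reach hy
      refine ⟨flatPt N e, ⟨hy, rext_flat hre,
        Relation.ReflTransGen.single (Or.inr ⟨e, rfl, rfl, hp, hre⟩)⟩, ?_⟩
      exact sat_dia.mpr ⟨natPt N e, rext_flat_nat, sat_top⟩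
  have part2 : ¬ N.val x 0 →
      ¬ ILSat (Rext N) (Sext N) v (old N x) (ILForm.top.rhd ILForm.top.dia) := by
    intro hp hsat
    obtain ⟨e, he⟩ := exists_endpoint N x
    obtain ⟨z, hS, hz⟩ := hsat (natPt N e) (rext_nat he) sat_top
    obtain ⟨_, _, hrt⟩ := hS
    have hze : z = natPt N e := snat_fixed hp hrt
    subst hze
    obtain ⟨u, hu, _⟩ := sat_dia.mp hz
    exact nat_no_succ hu
  refine ⟨part1, part2, ?_⟩
  constructor
  · intro hp _
    exact part1 hp
  · intro hsat
    by_contra hp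
    refine part2 hp (hsat ?_)
    obtain ⟨e, he⟩ := exists_endpoint N x
    exact sat_dia.mpr ⟨flatPt N e, rext_flat he,
      sat_dia.mpr ⟨natPt N e, rext_flat_nat, sat_top⟩⟩
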